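/- arXiv:2602.16398 — 3 statements merged into one kernel-verified Lean document; each statement's English description precedes it below -/
import Mathlib

section
/- Let K be a complete nonarchimedean valued field, O its valuation ring, and f : O^n → K^n a polynomial map with coefficients in O whose Jacobian determinant has absolute value 1 at every point of O^n. Then f maps O^n onto an open set containing, for each a ∈ O^n, the ball {y : ‖y − f(a)‖ < 1}; in particular f(O^n) is open in K^n. -/
/-!
Newton's method. On the unit polydisc an integral polynomial is bounded by `1`, is `1`-Lipschitz,
and has first-order Taylor remainder at most `‖u - v‖ ^ 2`: by the ultrametric inequality these
three bounds are stable under sums and products, so it suffices to check them on variables and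
integral constants. The Jacobian is integral with unit determinant, so by the adjugate formula its
inverse does not increase norms. Hence the Newton step `x ↦ x + J(x)⁻¹ (y - f x)` stays in the
polydisc, moves `x` by at most `‖y - f x‖` and squares the residual; starting from `a` with
`‖y - f a‖ < 1` the iterates converge to a preimage of `y`.
-/

open Filter Topology Metric Matrix MvPolynomial IsUltrametricDist

theorem exists_eq_of_quadratic_step {E F : Type*} [MetricSpace E] [CompleteSpace E]
    [MetricSpace F] {S : Set E} (hS : IsClosed S) {f : E → F} (hf : ContinuousOn f S) {y : F}
    (step : E → E)
    (hstep : ∀ x ∈ S, dist y (f x) < 1 → step x ∈ S ∧ dist (step x) x ≤ dist y (f x) ∧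
      dist y (f (step x)) ≤ dist y (f x) ^ 2)
    {a : E} (ha : a ∈ S) (hy : dist y (f a) < 1) : ∃ x ∈ S, f x = y := by
  set ε := dist y (f a)
  have hε : 0 ≤ ε := dist_nonneg
  set x : ℕ → E := fun k => step^[k] a
  have hx_succ (k : ℕ) : x (k + 1) = step (x k) := Function.iterate_succ_apply' step k a
  have hx (k : ℕ) : x k ∈ S ∧ dist y (f (x k)) ≤ ε ^ (k + 1) := by
    induction k with
    | zero => exact ⟨ha, (pow_one ε).ge⟩
    | succ k ih =>
      have hk : dist y (f (x k)) < 1 := ih.2.trans_lt (pow_lt_one₀ hε hy (by omega))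
      obtain ⟨hmem, -, hsq⟩ := hstep _ ih.1 hk
      rw [hx_succ]
      refine ⟨hmem, ?_⟩
      calc dist y (f (step (x k))) ≤ (ε ^ (k + 1)) ^ 2 := hsq.trans (by gcongr; exact ih.2)
        _ = ε ^ (2 * k + 2) := by ring
        _ ≤ ε ^ (k + 2) := pow_le_pow_of_le_one hε hy.le (by omega)
  have hcauchy : CauchySeq x := by
    refine cauchySeq_of_le_geometric ε ε hy fun k => ?_
    rw [hx_succ, dist_comm, ← pow_succ']
    have hk := hx k
    exact (hstep _ hk.1 (hk.2.trans_lt (pow_lt_one₀ hε hy (by omega)))).2.1.trans hk.2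
  obtain ⟨L, hL⟩ := cauchySeq_tendsto_of_complete hcauchy
  have hLS : L ∈ S := hS.mem_of_tendsto hL (Eventually.of_forall fun k => (hx k).1)
  have hfL : Tendsto (fun k => f (x k)) atTop (𝓝 (f L)) :=
    (hf L hLS).tendsto.comp (tendsto_nhdsWithin_iff.2 ⟨hL, Eventually.of_forall fun k => (hx k).1⟩)
  have hfy : Tendsto (fun k => f (x k)) atTop (𝓝 y) := by
    refine tendsto_iff_dist_tendsto_zero.2 (squeeze_zero (fun _ => dist_nonneg)
      (fun k => (dist_comm _ _).trans_le (hx k).2) ?_)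
    exact (tendsto_pow_atTop_nhds_zero_of_lt_one hε hy).comp (tendsto_add_atTop_nat 1)
  exact ⟨L, hLS, tendsto_nhds_unique hfL hfy⟩

namespace IsUltrametricDist

variable {n K : Type*} [Fintype n] [DecidableEq n] [NormedField K] [IsUltrametricDist K]

lemma norm_det_le_one {M : Matrix n n K} (hM : ∀ i j, ‖M i j‖ ≤ 1) : ‖M.det‖ ≤ 1 := by
  rw [Matrix.det_apply']
  refine norm_sum_le_of_forall_le_of_nonneg zero_le_one fun σ _ => ?_
  rw [norm_mul, norm_prod]
  exact mul_le_one₀ (norm_intCast_le_one K _) (Finset.prod_nonneg fun _ _ => norm_nonneg _)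
    (Finset.prod_le_one (fun _ _ => norm_nonneg _) fun i _ => hM _ _)

lemma norm_adjugate_apply_le_one {M : Matrix n n K} (hM : ∀ i j, ‖M i j‖ ≤ 1) (i j : n) :
    ‖M.adjugate i j‖ ≤ 1 := by
  rw [Matrix.adjugate_apply]
  refine norm_det_le_one fun k l => ?_
  rw [Matrix.updateRow_apply]
  split_ifs
  · rw [Pi.single_apply]; split_ifs <;> simp
  · exact hM k l

lemma norm_inv_mulVec_le {M : Matrix n n K} (hM : ∀ i j, ‖M i j‖ ≤ 1) (hdet : ‖M.det‖ = 1)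
    (w : n → K) : ‖M⁻¹ *ᵥ w‖ ≤ ‖w‖ := by
  refine pi_norm_le_iff_of_nonneg (norm_nonneg w) |>.2 fun i => ?_
  rw [Matrix.inv_def, Ring.inverse_eq_inv', Matrix.smul_mulVec, Pi.smul_apply, norm_smul,
    norm_inv, hdet, inv_one, one_mul]
  refine norm_sum_le_of_forall_le_of_nonneg (norm_nonneg w) fun j _ => ?_
  rw [norm_mul]
  exact (mul_le_of_le_one_left (norm_nonneg _) (norm_adjugate_apply_le_one hM i j)).trans
    (norm_le_pi_norm w j)

end IsUltrametricDist

namespace MvPolynomial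

variable {σ K : Type*} [NormedField K]

lemma norm_coeff_pderiv_le_one [IsUltrametricDist K] {p : MvPolynomial σ K}
    (hp : ∀ m, ‖p.coeff m‖ ≤ 1) (j : σ) (m : σ →₀ ℕ) : ‖(pderiv j p).coeff m‖ ≤ 1 := by
  rw [coeff_pderiv, norm_mul]
  exact mul_le_one₀ (hp _) (norm_nonneg _) (by exact_mod_cast norm_natCast_le_one K (m j + 1))

noncomputable def jacobian (f : σ → MvPolynomial σ K) (x : σ → K) : Matrix σ σ K :=
  Matrix.of fun i j => eval x (pderiv j (f i))

variable [Fintype σ]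

noncomputable def taylorRemainder (p : MvPolynomial σ K) (v u : σ → K) : K :=
  eval u p - eval v p - ∑ j, eval v (pderiv j p) * (u j - v j)

section Remainder

variable (p q : MvPolynomial σ K) (v u : σ → K)

@[simp]
lemma taylorRemainder_C (a : K) : taylorRemainder (C a) v u = 0 := by
  simp [taylorRemainder]

@[simp]
lemma taylorRemainder_X [DecidableEq σ] (i : σ) : taylorRemainder (X i) v u = 0 := by
  simp [taylorRemainder, pderiv_X, Pi.single_apply]

lemma taylorRemainder_add :
    taylorRemainder (p + q) v u = taylorRemainder p v u + taylorRemainder q v u := by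
  simp only [taylorRemainder, map_add, add_mul, Finset.sum_add_distrib]
  ring

lemma taylorRemainder_neg : taylorRemainder (-p) v u = -taylorRemainder p v u := by
  simp only [taylorRemainder, map_neg, neg_mul, Finset.sum_neg_distrib]
  ring

lemma taylorRemainder_mul :
    taylorRemainder (p * q) v u = taylorRemainder p v u * eval v q +
      (eval u p - eval v p) * (eval u q - eval v q) + eval v p * taylorRemainder q v u := by
  simp only [taylorRemainder, Derivation.leibniz, smul_eq_mul, map_add, map_mul, add_mul,
    Finset.sum_add_distrib, mul_assoc, ← Finset.mul_sum]
  ring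

end Remainder

noncomputable def newtonStep [DecidableEq σ] (f : σ → MvPolynomial σ K) (y x : σ → K) : σ → K :=
  x + (jacobian f x)⁻¹ *ᵥ (y - fun i => eval x (f i))

variable [IsUltrametricDist K]

variable (σ K) in
def taylorSubring : Subring (MvPolynomial σ K) where
  carrier := {p | ∀ u v : σ → K, ‖u‖ ≤ 1 → ‖v‖ ≤ 1 → ‖eval v p‖ ≤ 1 ∧
    ‖eval u p - eval v p‖ ≤ ‖u - v‖ ∧ ‖taylorRemainder p v u‖ ≤ ‖u - v‖ ^ 2}
  zero_mem' u v _ _ := by simp [taylorRemainder]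
  one_mem' u v _ _ := by simp [taylorRemainder]
  neg_mem' {p} hp u v hu hv := by
    obtain ⟨h₁, h₂, h₃⟩ := hp u v hu hv
    refine ⟨by simpa using h₁, ?_, by simpa [taylorRemainder_neg] using h₃⟩
    rwa [map_neg, map_neg, ← neg_add', norm_neg, ← sub_eq_add_neg]
  add_mem' {p q} hp hq u v hu hv := by
    obtain ⟨hp₁, hp₂, hp₃⟩ := hp u v hu hv
    obtain ⟨hq₁, hq₂, hq₃⟩ := hq u v hu hv
    refine ⟨?_, ?_, ?_⟩
    · rw [map_add]
      exact (norm_add_le_max _ _).trans (max_le hp₁ hq₁)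
    · rw [map_add, map_add, add_sub_add_comm]
      exact (norm_add_le_max _ _).trans (max_le hp₂ hq₂)
    · rw [taylorRemainder_add]
      exact (norm_add_le_max _ _).trans (max_le hp₃ hq₃)
  mul_mem' {p q} hp hq u v hu hv := by
    obtain ⟨hp₁, hp₂, hp₃⟩ := hp u v hu hv
    obtain ⟨hq₁, hq₂, hq₃⟩ := hq u v hu hv
    have hqu : ‖eval u q‖ ≤ 1 := (hq u u hu hu).1
    refine ⟨?_, ?_, ?_⟩
    · rw [map_mul, norm_mul]
      exact mul_le_one₀ hp₁ (norm_nonneg _) hq₁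
    · have : eval u (p * q) - eval v (p * q) =
          (eval u p - eval v p) * eval u q + eval v p * (eval u q - eval v q) := by
        simp only [map_mul]; ring
      rw [this]
      refine (norm_add_le_max _ _).trans (max_le ?_ ?_) <;> rw [norm_mul]
      · exact (mul_le_of_le_one_right (norm_nonneg _) hqu).trans hp₂
      · exact (mul_le_of_le_one_left (norm_nonneg _) hp₁).trans hq₂
    · rw [taylorRemainder_mul]
      refine (norm_add_le_max _ _).trans (max_le ((norm_add_le_max _ _).trans (max_le ?_ ?_)) ?_)
        <;> rw [norm_mul]
      · exact (mul_le_of_le_one_right (norm_nonneg _) hq₁).trans hp₃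
      · rw [sq]
        exact mul_le_mul hp₂ hq₂ (norm_nonneg _) (norm_nonneg _)
      · exact (mul_le_of_le_one_left (norm_nonneg _) hp₁).trans hq₃

lemma C_mem_taylorSubring {a : K} (ha : ‖a‖ ≤ 1) : C a ∈ taylorSubring σ K :=
  fun u v _ _ => by simpa using ha

lemma X_mem_taylorSubring (i : σ) : X i ∈ taylorSubring σ K := by
  classical
  intro u v _ hv
  simpa using ⟨(norm_le_pi_norm v i).trans hv, norm_le_pi_norm (u - v) i⟩

lemma mem_taylorSubring_of_norm_coeff_le_one {p : MvPolynomial σ K}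
    (hp : ∀ m, ‖p.coeff m‖ ≤ 1) : p ∈ taylorSubring σ K := by
  rw [p.as_sum]
  refine Subring.sum_mem _ fun m _ => ?_
  rw [monomial_eq]
  exact Subring.mul_mem _ (C_mem_taylorSubring (hp m))
    (Subring.prod_mem _ fun i _ => Subring.pow_mem _ (X_mem_taylorSubring i) _)

variable {f : σ → MvPolynomial σ K}

lemma norm_jacobian_apply_le_one (hf : ∀ i m, ‖(f i).coeff m‖ ≤ 1) {x : σ → K} (hx : ‖x‖ ≤ 1)
    (i j : σ) : ‖jacobian f x i j‖ ≤ 1 :=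
  (mem_taylorSubring_of_norm_coeff_le_one (norm_coeff_pderiv_le_one (hf i) j) x x hx hx).1

lemma norm_sub_sub_jacobian_mulVec_le (hf : ∀ i m, ‖(f i).coeff m‖ ≤ 1) {u v : σ → K}
    (hu : ‖u‖ ≤ 1) (hv : ‖v‖ ≤ 1) :
    ‖(fun i => eval u (f i)) - (fun i => eval v (f i)) - jacobian f v *ᵥ (u - v)‖ ≤ ‖u - v‖ ^ 2 :=
  pi_norm_le_iff_of_nonneg (by positivity) |>.2 fun i =>
    (mem_taylorSubring_of_norm_coeff_le_one (hf i) u v hu hv).2.2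

lemma newtonStep_spec [DecidableEq σ] (hf : ∀ i m, ‖(f i).coeff m‖ ≤ 1) {x y : σ → K}
    (hx : ‖x‖ ≤ 1)
    (hJ : ‖(jacobian f x).det‖ = 1) (hy : ‖y - fun i => eval x (f i)‖ ≤ 1) :
    ‖newtonStep f y x‖ ≤ 1 ∧ ‖newtonStep f y x - x‖ ≤ ‖y - fun i => eval x (f i)‖ ∧
      ‖y - fun i => eval (newtonStep f y x) (f i)‖ ≤ ‖y - fun i => eval x (f i)‖ ^ 2 := by
  set r := y - fun i => eval x (f i)
  set d := (jacobian f x)⁻¹ *ᵥ r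
  have hd : ‖d‖ ≤ ‖r‖ :=
    IsUltrametricDist.norm_inv_mulVec_le (norm_jacobian_apply_le_one hf hx) hJ r
  have hJd : jacobian f x *ᵥ d = r := by
    have hunit : IsUnit (jacobian f x).det :=
      isUnit_iff_ne_zero.2 (norm_ne_zero_iff.1 (by simp [hJ]))
    rw [mulVec_mulVec, mul_nonsing_inv _ hunit, one_mulVec]
  have hstep : newtonStep f y x = x + d := rfl
  have hxd : ‖x + d‖ ≤ 1 := (norm_add_le_max _ _).trans (max_le hx (hd.trans hy))
  refine ⟨hstep ▸ hxd, by rwa [hstep, add_sub_cancel_left], ?_⟩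
  have hres : y - (fun i => eval (x + d) (f i)) = -((fun i => eval (x + d) (f i)) -
      (fun i => eval x (f i)) - jacobian f x *ᵥ (x + d - x)) := by
    rw [add_sub_cancel_left, hJd, sub_sub_sub_cancel_right, neg_sub]
  rw [hstep, hres, norm_neg]
  calc _ ≤ ‖x + d - x‖ ^ 2 := norm_sub_sub_jacobian_mulVec_le hf hxd hx
    _ ≤ ‖r‖ ^ 2 := by rw [add_sub_cancel_left]; gcongr

end MvPolynomial

/-- effective open mapping theorem (étale case): a polynomial map
with integral coefficients and everywhere-unit Jacobian determinant maps the
unit polydisc onto a set containing the open unit ball around each image point;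
in particular the image is open. -/
theorem etale_open_mapping
    (K : Type*) [NormedField K] [CompleteSpace K]
    (hna : ∀ x y : K, ‖x + y‖ ≤ max ‖x‖ ‖y‖)
    (n : ℕ) (f : Fin n → MvPolynomial (Fin n) K)
    (hcoeff : ∀ i, ∀ m : Fin n →₀ ℕ, ‖(f i).coeff m‖ ≤ 1)
    (hJ : ∀ x : Fin n → K, (∀ i, ‖x i‖ ≤ 1) →
      ‖(Matrix.of fun i j => MvPolynomial.eval x (MvPolynomial.pderiv j (f i))).det‖ = 1) :
    (∀ a : Fin n → K, (∀ i, ‖a i‖ ≤ 1) →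
      ∀ y : Fin n → K, ‖y - (fun i => MvPolynomial.eval a (f i))‖ < 1 →
        y ∈ (fun x : Fin n → K => fun i => MvPolynomial.eval x (f i)) ''
              {x | ∀ i, ‖x i‖ ≤ 1}) ∧
    IsOpen ((fun x : Fin n → K => fun i => MvPolynomial.eval x (f i)) ''
              {x | ∀ i, ‖x i‖ ≤ 1}) := by
  have : IsUltrametricDist K := isUltrametricDist_of_forall_norm_add_le_max_norm hna
  set F : (Fin n → K) → Fin n → K := fun x i => eval x (f i)
  have hpolydisc : {x : Fin n → K | ∀ i, ‖x i‖ ≤ 1} = closedBall 0 1 := by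
    ext x
    simp [pi_norm_le_iff_of_nonneg zero_le_one]
  have hball (a : Fin n → K) (ha : a ∈ closedBall 0 1) : ball (F a) 1 ⊆ F '' closedBall 0 1 := by
    intro y hy
    refine exists_eq_of_quadratic_step isClosed_closedBall
      (continuous_pi fun i => continuous_eval (f i)).continuousOn (newtonStep f y)
      (fun x hx hxy => ?_) ha hy
    have hJx := hJ x (by rwa [← hpolydisc] at hx)
    rw [mem_closedBall_zero_iff] at hx ⊢
    simpa only [dist_eq_norm] using newtonStep_spec hcoeff hx hJx (dist_eq_norm y _ ▸ hxy.le)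
  rw [hpolydisc]
  refine ⟨fun a ha y hy => hball a (hpolydisc ▸ ha) (by rwa [mem_ball, dist_eq_norm]),
    isOpen_iff.2 ?_⟩
  rintro _ ⟨a, ha, rfl⟩
  exact ⟨1, one_pos, hball a ha⟩
end

section
/- Let K be a complete nonarchimedean valued field, and let f : O^n → K^n be a polynomial map with coefficients in O such that |det(Df(x))| = 1 for all x ∈ O^n. Then f is injective on every open ball of radius 1: if x, y ∈ O^n with ‖x − y‖ < 1 and f(x) = f(y), then x = y. -/
/-!
Lift everything to the valuation ring `𝒪 = {‖a‖ ≤ 1}`. Over any commutative ring, if the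
coordinates of `h` lie in an ideal `I`, then `p (x + h) ≡ p x + Dp(x) h` modulo `I²`. Take
`h = y - x` and `I` the ideal generated by its coordinates: `f x = f y` gives
`Df(x) h ≡ 0` modulo `I²`, and since `det Df(x)` is a unit, `h ≡ 0` modulo `I²`, i.e.
`I ≤ I²`. As `‖h‖ < 1`, `I` lies in the Jacobson radical of `𝒪`, so `I = 0` by Nakayama's
lemma.
-/

open MvPolynomial
open scoped Matrix

namespace Matrix

variable {R n : Type*} [CommRing R] [Fintype n] [DecidableEq n]

theorem mem_ideal_of_mulVec_mem {I : Ideal R} {A : Matrix n n R} (hA : IsUnit A.det) {w : n → R}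
    (hw : ∀ i, (A *ᵥ w) i ∈ I) (j : n) : w j ∈ I := by
  rw [← one_mulVec w, ← nonsing_inv_mul A hA, ← mulVec_mulVec]
  exact Ideal.sum_mem _ fun k _ => I.mul_mem_left _ (hw k)

end Matrix

namespace MvPolynomial

variable {R σ : Type*} [CommRing R]

noncomputable def jacobianMatrix (q : σ → MvPolynomial σ R) (x : σ → R) : Matrix σ σ R :=
  Matrix.of fun i j => eval x (pderiv j (q i))

theorem eval_map_comp {S : Type*} [CommRing S] (φ : R →+* S) (x : σ → R)
    (p : MvPolynomial σ R) : eval (φ ∘ x) (map φ p) = φ (eval x p) := by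
  rw [eval_map, eval₂_comp]

theorem jacobianMatrix_map {S : Type*} [CommRing S] (φ : R →+* S) (q : σ → MvPolynomial σ R)
    (x : σ → R) :
    jacobianMatrix (fun i => map φ (q i)) (φ ∘ x) = (jacobianMatrix q x).map φ := by
  ext i j
  simp [jacobianMatrix, pderiv_map, ← eval_map_comp]

variable [Fintype σ]

theorem eval_add_sub_eval_sub_sum_pderiv_mem_sq (p : MvPolynomial σ R) (x : σ → R)
    {h : σ → R} {I : Ideal R} (hh : ∀ j, h j ∈ I) :
    eval (x + h) p - eval x p - ∑ j, eval x (pderiv j p) * h j ∈ I ^ 2 := by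
  classical
  induction p using MvPolynomial.induction_on with
  | C a => simp
  | add p q hp hq =>
    convert add_mem hp hq using 1
    simp only [map_add, add_mul, Finset.sum_add_distrib]
    ring
  | mul_X p i hp =>
    set lin := ∑ j, eval x (pderiv j p) * h j
    have hlin : lin ∈ I := Ideal.sum_mem _ fun j _ => I.mul_mem_left _ (hh j)
    have hleibniz : ∑ j, eval x (pderiv j (p * X i)) * h j = lin * x i + eval x p * h i := by
      simp only [lin, Derivation.leibniz, pderiv_X, smul_eq_mul, map_add, map_mul, eval_X,
        add_mul, Finset.sum_add_distrib, Finset.sum_mul]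
      simp [Pi.single_apply, add_comm, mul_comm, mul_left_comm]
    have hexpand : eval (x + h) (p * X i) - eval x (p * X i)
        - ∑ j, eval x (pderiv j (p * X i)) * h j
        = (eval (x + h) p - eval x p - lin) * x i
          + ((eval (x + h) p - eval x p - lin) + lin) * h i := by
      rw [hleibniz]
      simp only [map_mul, eval_X, Pi.add_apply]
      ring
    rw [sq] at hp ⊢
    rw [hexpand]
    exact add_mem (Ideal.mul_mem_right _ _ hp)
      (Ideal.mul_mem_mul (add_mem (Ideal.mul_le_right hp) hlin) (hh i))

theorem eq_of_eval_eq_of_isUnit_det_jacobianMatrix [DecidableEq σ] {q : σ → MvPolynomial σ R}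
    {x y : σ → R} (hJ : IsUnit (jacobianMatrix q x).det)
    (hxy : ∀ j, y j - x j ∈ (⊥ : Ideal R).jacobson)
    (heq : ∀ i, eval x (q i) = eval y (q i)) : x = y := by
  set J := Ideal.span (Set.range (y - x))
  have hmem : ∀ j, (y - x) j ∈ J := fun j => Ideal.subset_span ⟨j, rfl⟩
  have hsq : J ≤ J ^ 2 := by
    refine Ideal.span_le.2 <| Set.range_subset_iff.2 <|
      Matrix.mem_ideal_of_mulVec_mem hJ fun i => ?_
    have := eval_add_sub_eval_sub_sum_pderiv_mem_sq (q i) x hmem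
    change _ - _ - (jacobianMatrix q x *ᵥ (y - x)) i ∈ J ^ 2 at this
    rwa [add_sub_cancel, ← heq i, sub_self, zero_sub, neg_mem_iff] at this
  have hJbot : J = ⊥ :=
    Submodule.eq_bot_of_le_smul_of_le_jacobson_bot J J (Submodule.fg_span (Set.finite_range _))
      (by rwa [smul_eq_mul, ← sq]) (Ideal.span_le.2 (Set.range_subset_iff.2 hxy))
  funext j
  simpa [hJbot, sub_eq_zero, eq_comm] using hmem j

end MvPolynomial

namespace NormedField

variable {K : Type*} [NormedField K] [IsUltrametricDist K]

local notation "𝒪" => Valuation.integer (valuation (K := K))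

theorem mem_valuation_integer_iff {x : K} : x ∈ 𝒪 ↔ ‖x‖ ≤ 1 := by
  rw [Valuation.mem_integer_iff, valuation_apply, ← NNReal.coe_le_coe, coe_nnnorm,
    NNReal.coe_one]

theorem isUnit_of_norm_eq_one {a : 𝒪} (ha : ‖(a : K)‖ = 1) : IsUnit a :=
  (Valuation.integer.integers _).isUnit_iff_valuation_eq_one.2 (NNReal.eq ha)

theorem mem_jacobson_bot_of_norm_lt_one {a : 𝒪} (ha : ‖(a : K)‖ < 1) :
    a ∈ (⊥ : Ideal 𝒪).jacobson := by
  refine Ideal.mem_jacobson_bot.2 fun b => isUnit_of_norm_eq_one ?_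
  have hab : ‖(a * b : K)‖ < ‖(1 : K)‖ := by
    rw [norm_mul, norm_one]
    exact mul_lt_one_of_nonneg_of_lt_one_left (norm_nonneg _) ha
      (mem_valuation_integer_iff.1 b.2)
  push_cast
  rw [IsUltrametricDist.norm_add_eq_max_of_norm_ne_norm hab.ne, max_eq_right hab.le, norm_one]

theorem exists_map_subtype_eq {σ : Type*} (p : MvPolynomial σ K)
    (hp : ∀ m, ‖p.coeff m‖ ≤ 1) :
    ∃ q : MvPolynomial σ 𝒪, map (𝒪).subtype q = p := by
  refine mem_range_map_iff_coeffs_subset.2 fun c hc => ?_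
  obtain ⟨m, -, rfl⟩ := mem_coeffs_iff.1 hc
  exact ⟨⟨_, mem_valuation_integer_iff.2 (hp m)⟩, rfl⟩

end NormedField

theorem etale_injective_on_unit_balls_general
    (K : Type*) [NormedField K]
    (hna : ∀ x y : K, ‖x + y‖ ≤ max ‖x‖ ‖y‖)
    (n : ℕ) (f : Fin n → MvPolynomial (Fin n) K)
    (hcoeff : ∀ i, ∀ m : Fin n →₀ ℕ, ‖(f i).coeff m‖ ≤ 1)
    (hJ : ∀ x : Fin n → K, (∀ i, ‖x i‖ ≤ 1) →
      ‖(Matrix.of fun i j => MvPolynomial.eval x (MvPolynomial.pderiv j (f i))).det‖ = 1)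
    (x y : Fin n → K) (hx : ∀ i, ‖x i‖ ≤ 1) (hy : ∀ i, ‖y i‖ ≤ 1)
    (hclose : ‖x - y‖ < 1)
    (heq : ∀ i, MvPolynomial.eval x (f i) = MvPolynomial.eval y (f i)) :
    x = y := by
  have := IsUltrametricDist.isUltrametricDist_of_forall_norm_add_le_max_norm hna
  set O := Valuation.integer (NormedField.valuation (K := K))
  choose q hq using fun i => NormedField.exists_map_subtype_eq (f i) (hcoeff i)
  obtain rfl : f = fun i => map O.subtype (q i) := funext fun i => (hq i).symm
  lift x to Fin n → O using fun i => NormedField.mem_valuation_integer_iff.2 (hx i)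
  lift y to Fin n → O using fun i => NormedField.mem_valuation_integer_iff.2 (hy i)
  have hdet : IsUnit (jacobianMatrix q x).det := by
    refine NormedField.isUnit_of_norm_eq_one ?_
    have := hJ (O.subtype ∘ x) hx
    rwa [← jacobianMatrix, jacobianMatrix_map, ← RingHom.mapMatrix_apply, ← RingHom.map_det]
      at this
  have hsmall : ∀ j, y j - x j ∈ (⊥ : Ideal O).jacobson := fun j =>
    NormedField.mem_jacobson_bot_of_norm_lt_one <| by
      simpa [norm_sub_rev] using (norm_le_pi_norm _ j).trans_lt hclose
  have heval : ∀ i, eval x (q i) = eval y (q i) := fun i => Subtype.val_injective <|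
    (eval_map_comp O.subtype x (q i)).symm.trans
      ((heq i).trans (eval_map_comp O.subtype y (q i)))
  exact congrArg (O.subtype ∘ ·) (eq_of_eval_eq_of_isUnit_det_jacobianMatrix hdet hsmall heval)

/-- quantitative injectivity (monomorphism on unit balls) of a
polynomial map with integral coefficients and everywhere-unit Jacobian
determinant. -/
theorem etale_injective_on_unit_balls
    (K : Type*) [NormedField K] [CompleteSpace K]
    (hna : ∀ x y : K, ‖x + y‖ ≤ max ‖x‖ ‖y‖)
    (n : ℕ) (f : Fin n → MvPolynomial (Fin n) K)
    (hcoeff : ∀ i, ∀ m : Fin n →₀ ℕ, ‖(f i).coeff m‖ ≤ 1)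
    (hJ : ∀ x : Fin n → K, (∀ i, ‖x i‖ ≤ 1) →
      ‖(Matrix.of fun i j => MvPolynomial.eval x (MvPolynomial.pderiv j (f i))).det‖ = 1)
    (x y : Fin n → K) (hx : ∀ i, ‖x i‖ ≤ 1) (hy : ∀ i, ‖y i‖ ≤ 1)
    (hclose : ‖x - y‖ < 1)
    (heq : ∀ i, MvPolynomial.eval x (f i) = MvPolynomial.eval y (f i)) :
    x = y :=
  etale_injective_on_unit_balls_general K hna n f hcoeff hJ x y hx hy hclose heq
end

section
/- Let k be a field and γ : X → Y a morphism of finite-type reduced k-schemes that is surjective on L-points for every field extension L/k. Then Y admits a finite stratification into locally closed subschemes Y = ⊔_α Y_α such that for each α the restricted morphism γ^{-1}(Y_α) → Y_α admits a section. -/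
/-!
By Noetherian induction on the closed subsets of `Y`, it suffices to find in every nonempty
closed `Z ⊆ Y` a nonempty relatively open piece over which `γ` has a section. Near the generic
point `η` of an irreducible component of `Z` such a piece exists: the closure of `η` in an affine
neighbourhood is an integral subscheme `T`, its function-field point lifts to `X` by hypothesis,
and since `X` is of finite type the lift spreads out to a section over a dense open subset of `T`.
-/

open AlgebraicGeometry CategoryTheory TopologicalSpace Topology Function

lemma pairwise_disjoint_fin_cons {α : Type*} {N : ℕ} {s : Set α} {S : Fin N → Set α}
    (hs : ∀ a, Disjoint s (S a)) (hS : Pairwise (Disjoint on S)) :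
    Pairwise (Disjoint on (Fin.cons s S : Fin (N + 1) → Set α)) := by
  intro a b hab
  cases a using Fin.cases <;> cases b using Fin.cases
  · exact absurd rfl hab
  · exact hs _
  · exact (hs _).symm
  · exact hS (fun h ↦ hab (congrArg Fin.succ h))

section Topology

variable {α β : Type*} [TopologicalSpace α] [TopologicalSpace β]

lemma exists_isOpen_inter_subset_closure_singleton [NoetherianSpace α] [QuasiSober α]
    {Z : Set α} (hZ : IsClosed Z) (hne : Z.Nonempty) :
    ∃ η ∈ Z, ∃ O : Set α, IsOpen O ∧ η ∈ O ∧ Z ∩ O ⊆ closure {η} := by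
  obtain ⟨z, hz⟩ := hne
  set C := irreducibleComponent (⟨z, hz⟩ : Z)
  have hC : C ∈ irreducibleComponents Z := irreducibleComponent_mem_irreducibleComponents _
  obtain ⟨o, ho, ⟨w, hw⟩, hoC⟩ :=
    NoetherianSpace.exists_isOpen_nonempty_subset_irreducibleComponent C hC
  obtain ⟨O, hO, rfl⟩ := isOpen_induced_iff.mp ho
  obtain ⟨η, hη⟩ := QuasiSober.sober (hC.1.image _ continuous_subtype_val.continuousOn).closure
    isClosed_closure
  have hZO : Z ∩ O ⊆ closure {η} := by
    rintro t ⟨htZ, htO⟩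
    rw [hη.def]
    exact subset_closure ⟨⟨t, htZ⟩, hoC htO, rfl⟩
  refine ⟨η, ?_, O, hO, ?_, hZO⟩
  · exact closure_minimal (Set.image_subset_iff.mpr fun _ _ ↦ Subtype.prop _) hZ hη.mem
  · exact (hη.mem_open_set_iff hO).mpr ⟨w, subset_closure ⟨w, hoC hw, rfl⟩, hw⟩

theorem exists_partition_of_exists_isOpen_inter [NoetherianSpace α] {P : Set α → Prop}
    (hP : ∀ Z : Set α, IsClosed Z → Z.Nonempty → ∃ O, IsOpen O ∧ (Z ∩ O).Nonempty ∧ P (Z ∩ O))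
    {Z : Set α} (hZ : IsClosed Z) :
    ∃ (N : ℕ) (S : Fin N → Set α), (∀ a, P (S a)) ∧ Pairwise (Disjoint on S) ∧ ⋃ a, S a = Z := by
  lift Z to Closeds α using hZ
  induction Z using WellFoundedLT.induction with
  | _ Z IH =>
  rcases (Z : Set α).eq_empty_or_nonempty with hZ | hZ
  · exact ⟨0, Fin.elim0, fun a ↦ a.elim0, fun a ↦ a.elim0, by simp [hZ]⟩
  obtain ⟨O, hO, ⟨t, htZ, htO⟩, hPO⟩ := hP Z Z.isClosed hZ
  have hlt : (⟨Z \ O, Z.isClosed.sdiff hO⟩ : Closeds α) < Z :=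
    SetLike.lt_iff_le_and_exists.mpr ⟨Set.sdiff_subset, t, htZ, fun h ↦ h.2 htO⟩
  obtain ⟨N, S, hPS, hS, hSZ⟩ := IH _ hlt
  replace hSZ : ⋃ a, S a = (Z : Set α) \ O := hSZ
  refine ⟨N + 1, Fin.cons (Z ∩ O) S, Fin.cases hPO hPS, pairwise_disjoint_fin_cons ?_ hS, ?_⟩
  · exact fun a ↦ (disjoint_sdiff_self_right.mono_left Set.inter_subset_right).mono_right
      (hSZ ▸ Set.subset_iUnion S a)
  · rw [Set.iUnion_cons, hSZ, Set.inter_union_sdiff]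

theorem exists_partition_of_forall_closure_singleton [NoetherianSpace α] [QuasiSober α]
    {P : Set α → Prop} (hP_inter : ∀ S O, IsOpen O → P S → P (S ∩ O))
    (hP_closure : ∀ η : α, ∃ O, IsOpen O ∧ η ∈ O ∧ P (closure {η} ∩ O)) :
    ∃ (N : ℕ) (S : Fin N → Set α), (∀ a, P (S a)) ∧ Pairwise (Disjoint on S) ∧
      ⋃ a, S a = Set.univ := by
  refine exists_partition_of_exists_isOpen_inter (fun Z hZ hne ↦ ?_) isClosed_univ
  obtain ⟨η, hηZ, O', hO', hηO', hZO'⟩ := exists_isOpen_inter_subset_closure_singleton hZ hne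
  obtain ⟨O, hO, hηO, hPO⟩ := hP_closure η
  have hη : closure {η} ⊆ Z := closure_minimal (Set.singleton_subset_iff.mpr hηZ) hZ
  have hpiece : Z ∩ (O ∩ O') = closure {η} ∩ O ∩ O' := by
    ext t; constructor
    · rintro ⟨htZ, htO, htO'⟩; exact ⟨⟨hZO' ⟨htZ, htO'⟩, htO⟩, htO'⟩
    · rintro ⟨⟨htη, htO⟩, htO'⟩; exact ⟨hη htη, htO, htO'⟩
  exact ⟨O ∩ O', hO.inter hO', ⟨η, hηZ, hηO, hηO'⟩, hpiece ▸ hP_inter _ _ hO' hPO⟩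

lemma Topology.IsEmbedding.exists_isOpen_image_eq_closure_inter {f : α → β} (hf : IsEmbedding f)
    (hlc : IsLocallyClosed (Set.range f)) {x : α} (hx : closure {x} = Set.univ)
    {V : Set α} (hV : IsOpen V) : ∃ O, IsOpen O ∧ f '' V = closure {f x} ∩ O := by
  obtain ⟨O, hO, rfl⟩ := hf.isInducing.isOpen_iff.mp hV
  have hcl : closure (Set.range f) = closure {f x} := by
    refine le_antisymm ?_ (closure_mono (by simp))
    rw [← Set.image_univ, ← hx]
    exact closure_minimal (image_closure_subset_closure_image hf.continuous |>.trans (by simp))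
      isClosed_closure
  refine ⟨coborder (Set.range f) ∩ O, hlc.isOpen_coborder.inter hO, ?_⟩
  rw [Set.image_preimage_eq_range_inter, ← hcl, ← Set.inter_assoc, closure_inter_coborder]

end Topology

universe u

namespace AlgebraicGeometry

variable {X Y : Scheme.{u}}

def Scheme.Hom.HasSectionOver (γ : X ⟶ Y) (S : Set Y) : Prop :=
  ∃ (W : Scheme.{u}) (ι : W ⟶ Y), IsImmersion ι ∧ Set.range ι.base = S ∧ ∃ s : W ⟶ X, s ≫ γ = ι

lemma Scheme.Hom.HasSectionOver.inter_isOpen {γ : X ⟶ Y} {S : Set Y} (h : γ.HasSectionOver S)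
    {O : Set Y} (hO : IsOpen O) : γ.HasSectionOver (S ∩ O) := by
  obtain ⟨W, ι, hι, rfl, s, hs⟩ := h
  let V : W.Opens := ι ⁻¹ᵁ ⟨O, hO⟩
  refine ⟨V, V.ι ≫ ι, inferInstance, ?_, V.ι ≫ s, by rw [Category.assoc, hs]⟩
  rw [Scheme.Hom.comp_base, TopCat.coe_comp, Set.range_comp, Scheme.Opens.range_ι]
  exact Set.image_preimage_eq_range_inter

lemma Scheme.Opens.fromSpecStalk_comp_eq_of_fromSpecStalkOfMem_comp_eq {Z : Scheme.{u}}
    (U : Y.Opens) {y : Y} (hy : y ∈ U) {f g : U.toScheme ⟶ Z}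
    (h : U.fromSpecStalkOfMem y hy ≫ f = U.fromSpecStalkOfMem y hy ≫ g) :
    U.toScheme.fromSpecStalk ⟨y, hy⟩ ≫ f = U.toScheme.fromSpecStalk ⟨y, hy⟩ ≫ g := by
  have : IsIso (U.ι.stalkMap ⟨y, hy⟩) := (IsOpenImmersion.iff_isIso_stalkMap.mp inferInstance).2 _
  have hdef : U.fromSpecStalkOfMem y hy =
      Spec.map (inv (U.ι.stalkMap ⟨y, hy⟩)) ≫ U.toScheme.fromSpecStalk ⟨y, hy⟩ := rfl
  rw [hdef] at h
  exact (cancel_epi (Spec.map (inv (U.ι.stalkMap ⟨y, hy⟩)))).mp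
    ((Category.assoc _ _ _).symm.trans (h.trans (Category.assoc _ _ _)))

lemma Scheme.exists_isImmersion_genericPoint_eq (Y : Scheme.{u}) (η : Y) :
    ∃ (T : Scheme.{u}) (_ : IsIntegral T) (j : T ⟶ Y), IsImmersion j ∧ j (genericPoint T) = η := by
  obtain ⟨_, ⟨U, hU, rfl⟩, hηU, -⟩ :=
    Y.isBasis_affineOpens.exists_subset_of_mem_open (Set.mem_univ η) isOpen_univ
  replace hU : IsAffineOpen U := hU
  set p := hU.primeIdealOf ⟨η, hηU⟩
  let R := CommRingCat.of (Γ(Y, U) ⧸ p.asIdeal)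
  have : IsDomain R := Ideal.Quotient.isDomain _
  have := IsClosedImmersion.spec_of_quotient_mk p.asIdeal
  refine ⟨Spec R, inferInstance,
    Spec.map (CommRingCat.ofHom (Ideal.Quotient.mk p.asIdeal)) ≫ hU.fromSpec, inferInstance, ?_⟩
  have hp : Spec.map (CommRingCat.ofHom (Ideal.Quotient.mk p.asIdeal)) (⊥ : PrimeSpectrum R) = p :=
    PrimeSpectrum.ext ((RingHom.ker_eq_comap_bot _).symm.trans (Ideal.mk_ker))
  rw [Scheme.Hom.comp_apply, genericPoint_eq_bot_of_affine, hp, hU.fromSpec_primeIdealOf]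

lemma spread_out_lift_of_isGermInjective {S T : Scheme.{u}} {sX : X ⟶ S} {sY : Y ⟶ S}
    [LocallyOfFiniteType sX] {γ : X ⟶ Y} (hover : γ ≫ sY = sX) (q : T ⟶ Y) {t : T}
    [T.IsGermInjectiveAt t] (x₀ : Spec (T.presheaf.stalk t) ⟶ X)
    (hx₀ : x₀ ≫ γ = T.fromSpecStalk t ≫ q) :
    ∃ (V : Scheme.{u}) (ι : V ⟶ T), IsOpenImmersion ι ∧ t ∈ Set.range ι ∧
      ∃ f : V ⟶ X, f ≫ γ = ι ≫ q := by
  obtain ⟨U, htU, f, hf, -⟩ := spread_out_of_isGermInjective' (sX := q ≫ sY) (sY := sX) x₀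
    (by rw [← hover, reassoc_of% hx₀])
  have : U.toScheme.IsGermInjectiveAt ⟨t, htU⟩ :=
    (isGermInjectiveAt_iff_of_isOpenImmersion (f := U.ι)).mp ‹_›
  have hstalk := U.fromSpecStalk_comp_eq_of_fromSpecStalkOfMem_comp_eq htU (f := f ≫ γ)
    (g := U.ι ≫ q) (by rw [← reassoc_of% hf, hx₀, Scheme.Opens.fromSpecStalkOfMem_ι_assoc])
  obtain ⟨V, htV, hV⟩ := spread_out_unique_of_isGermInjective' _ _ hstalk
  exact ⟨V, V.ι ≫ U.ι, inferInstance, ⟨⟨⟨t, htU⟩, htV⟩, rfl⟩, V.ι ≫ f, by simp [hV]⟩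

theorem exists_hasSectionOver_closure_singleton_inter {S : Scheme.{u}} {sX : X ⟶ S} {sY : Y ⟶ S}
    [LocallyOfFiniteType sX] {γ : X ⟶ Y} (hover : γ ≫ sY = sX)
    (hlift : ∀ (K : Type u) [Field K] (y : Spec (.of K) ⟶ Y), ∃ x, x ≫ γ = y) (η : Y) :
    ∃ O, IsOpen O ∧ η ∈ O ∧ γ.HasSectionOver (closure {η} ∩ O) := by
  obtain ⟨T, _, j, _, rfl⟩ := Y.exists_isImmersion_genericPoint_eq η
  let : Field (T.presheaf.stalk (genericPoint T)) := inferInstanceAs (Field T.functionField)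
  obtain ⟨x₀, hx₀⟩ := hlift _ (T.fromSpecStalk (genericPoint T) ≫ j)
  obtain ⟨V, ι, _, hV, f, hf⟩ := spread_out_lift_of_isGermInjective hover j x₀ hx₀
  obtain ⟨O, hO, hVO⟩ := j.isEmbedding.exists_isOpen_image_eq_closure_inter
    j.isLocallyClosed_range (genericPoint_spec T).def ι.isOpenEmbedding.isOpen_range
  refine ⟨O, hO, (hVO.subset ⟨_, hV, rfl⟩).2, _, ι ≫ j, inferInstance, ?_, f, hf⟩
  rw [Scheme.Hom.comp_base, TopCat.coe_comp, Set.range_comp]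
  exact hVO

end AlgebraicGeometry

theorem stratification_with_sections_of_surjective_on_points_general
    (k : Type) [Field k]
    (X Y : Scheme) (sX : X ⟶ Spec (CommRingCat.of k)) (sY : Y ⟶ Spec (CommRingCat.of k))
    [LocallyOfFiniteType sX] [LocallyOfFiniteType sY]
    [CompactSpace Y]
    (γ : X ⟶ Y) (hover : γ ≫ sY = sX)
    (hsurj : ∀ (L : Type) [Field L] (i : k →+* L)
      (y : Spec (CommRingCat.of L) ⟶ Y),
      y ≫ sY = Spec.map (CommRingCat.ofHom i) →
      ∃ x : Spec (CommRingCat.of L) ⟶ X, x ≫ γ = y) :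
    ∃ (N : ℕ) (W : Fin N → Scheme) (ι : ∀ a, W a ⟶ Y),
      (∀ a, IsImmersion (ι a)) ∧
      (∀ a b, a ≠ b → Set.range (ι a).base ∩ Set.range (ι b).base = ∅) ∧
      (⋃ a, Set.range (ι a).base) = Set.univ ∧
      ∀ a, ∃ s : W a ⟶ X, s ≫ γ = ι a := by
  have : IsLocallyNoetherian Y := LocallyOfFiniteType.isLocallyNoetherian sY
  have : IsNoetherian Y := {}
  have hlift : ∀ (K : Type) [Field K] (y : Spec (.of K) ⟶ Y), ∃ x, x ≫ γ = y := fun K _ y ↦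
    hsurj K (Spec.preimage (y ≫ sY)).hom y (by rw [CommRingCat.ofHom_hom, Spec.map_preimage])
  obtain ⟨N, S, hS, hdisj, hcover⟩ := exists_partition_of_forall_closure_singleton
    (fun _ _ hO h ↦ h.inter_isOpen hO) (exists_hasSectionOver_closure_singleton_inter hover hlift)
  choose W ι hι hrange s hs using hS
  refine ⟨N, W, ι, hι, fun a b hab ↦ ?_, by simpa only [hrange] using hcover, fun a ↦ ⟨s a, hs a⟩⟩
  rw [hrange, hrange]
  exact Set.disjoint_iff_inter_eq_empty.mp (hdisj hab)

/-- a morphism of finite-type reduced schemes over a field `k`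
that is surjective on `L`-points for every field extension `L/k` admits a
finite stratification of the target into locally closed subschemes over each of
which it admits a section. -/
theorem stratification_with_sections_of_surjective_on_points
    (k : Type) [Field k]
    (X Y : Scheme) (sX : X ⟶ Spec (CommRingCat.of k)) (sY : Y ⟶ Spec (CommRingCat.of k))
    [LocallyOfFiniteType sX] [LocallyOfFiniteType sY]
    [CompactSpace X] [CompactSpace Y]
    [IsReduced X] [IsReduced Y]
    (γ : X ⟶ Y) (hover : γ ≫ sY = sX)
    (hsurj : ∀ (L : Type) [Field L] (i : k →+* L)
      (y : Spec (CommRingCat.of L) ⟶ Y),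
      y ≫ sY = Spec.map (CommRingCat.ofHom i) →
      ∃ x : Spec (CommRingCat.of L) ⟶ X, x ≫ γ = y) :
    ∃ (N : ℕ) (W : Fin N → Scheme) (ι : ∀ a, W a ⟶ Y),
      (∀ a, IsImmersion (ι a)) ∧
      (∀ a b, a ≠ b → Set.range (ι a).base ∩ Set.range (ι b).base = ∅) ∧
      (⋃ a, Set.range (ι a).base) = Set.univ ∧
      ∀ a, ∃ s : W a ⟶ X, s ≫ γ = ι a :=
  stratification_with_sections_of_surjective_on_points_general k X Y sX sY γ hover hsurj
end
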